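/- Let M be the 5×3 matrix over a field with rows (c_6, 0, 0), (c_7, c_6, 0), (c_3, 0, 0), (c_1, 0, c_3), (c_4, c_3, c_6), depending on parameters c_1, c_3, c_4, c_6, c_7. Then rank(M) ≠ 2 for all values of the parameters: rank(M) = 3 if and only if c_3 ≠ 0 or c_6 ≠ 0, and rank(M) ≤ 1 if c_3 = c_6 = 0. -/

import Mathlib

private lemma rank_rows_le {K : Type*} [Field K] (M : Matrix (Fin 5) (Fin 3) K)
    (f : Fin 3 → Fin 5) : (M.submatrix f id).rank ≤ M.rank := by
  have h : M.submatrix f id =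
      (Matrix.of fun i j => if j = f i then (1 : K) else 0) * M := by
    ext i j
    simp [Matrix.mul_apply]
  rw [h]
  exact Matrix.rank_mul_le_right _ _

/-- Let `M` be the 5×3 matrix over a field with rows `(c₆, 0, 0)`, `(c₇, c₆, 0)`,
`(c₃, 0, 0)`, `(c₁, 0, c₃)`, `(c₄, c₃, c₆)`.  Then for all values of the
parameters: `rank M = 3` iff `c₃ ≠ 0` or `c₆ ≠ 0`; if `c₃ = c₆ = 0` then
`rank M ≤ 1`; and in particular `rank M ≠ 2`. -/
theorem rank_M_ne_two {K : Type*} [Field K] (c₁ c₃ c₄ c₆ c₇ : K) :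
    ((!![c₆, 0, 0; c₇, c₆, 0; c₃, 0, 0; c₁, 0, c₃; c₄, c₃, c₆] :
        Matrix (Fin 5) (Fin 3) K).rank = 3 ↔ (c₃ ≠ 0 ∨ c₆ ≠ 0)) ∧
    (c₃ = 0 ∧ c₆ = 0 →
      (!![c₆, 0, 0; c₇, c₆, 0; c₃, 0, 0; c₁, 0, c₃; c₄, c₃, c₆] :
        Matrix (Fin 5) (Fin 3) K).rank ≤ 1) ∧
    (!![c₆, 0, 0; c₇, c₆, 0; c₃, 0, 0; c₁, 0, c₃; c₄, c₃, c₆] :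
        Matrix (Fin 5) (Fin 3) K).rank ≠ 2 := by
  set M : Matrix (Fin 5) (Fin 3) K :=
    !![c₆, 0, 0; c₇, c₆, 0; c₃, 0, 0; c₁, 0, c₃; c₄, c₃, c₆] with hM
  -- rank ≤ 1 when c₃ = c₆ = 0
  have hle1 : c₃ = 0 ∧ c₆ = 0 → M.rank ≤ 1 := by
    rintro ⟨rfl, rfl⟩
    have h : M = (Matrix.replicateCol (Fin 1) (![0, c₇, 0, c₁, c₄] : Fin 5 → K)) *
        (Matrix.replicateRow (Fin 1) (![1, 0, 0] : Fin 3 → K)) := by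
      ext i j
      fin_cases i <;> fin_cases j <;>
        simp [hM, Matrix.mul_apply, Fin.sum_univ_succ, Matrix.vecHead, Matrix.vecTail,
          Matrix.replicateCol, Matrix.replicateRow]
    calc M.rank ≤ (Matrix.replicateCol (Fin 1) (![0, c₇, 0, c₁, c₄] : Fin 5 → K)).rank := by
          rw [h]; exact Matrix.rank_mul_le_left _ _
      _ ≤ Fintype.card (Fin 1) := Matrix.rank_le_card_width _
      _ = 1 := rfl
  -- rank = 3 when c₃ ≠ 0 or c₆ ≠ 0
  have h3 : (c₃ ≠ 0 ∨ c₆ ≠ 0) → M.rank = 3 := by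
    intro h
    have hub : M.rank ≤ 3 := by
      simpa using Matrix.rank_le_card_width M
    have hlb : 3 ≤ M.rank := by
      rcases h with h | h
      · have hle := rank_rows_le M ![2, 4, 3]
        have hsub : M.submatrix ![2, 4, 3] id = !![c₃, 0, 0; c₄, c₃, c₆; c₁, 0, c₃] := by
          ext i j; fin_cases i <;> fin_cases j <;> simp [hM]
        rw [hsub] at hle
        have hdetval : (!![c₃, 0, 0; c₄, c₃, c₆; c₁, 0, c₃]).det = c₃ ^ 3 := by
          simp [Matrix.det_fin_three]; ring
        have hdet : IsUnit (!![c₃, 0, 0; c₄, c₃, c₆; c₁, 0, c₃]).det := by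
          rw [hdetval]; exact isUnit_iff_ne_zero.2 (pow_ne_zero 3 h)
        have hr := Matrix.rank_of_isUnit _ ((Matrix.isUnit_iff_isUnit_det _).2 hdet)
        rw [hr] at hle
        simpa using hle
      · have hle := rank_rows_le M ![0, 1, 4]
        have hsub : M.submatrix ![0, 1, 4] id = !![c₆, 0, 0; c₇, c₆, 0; c₄, c₃, c₆] := by
          ext i j; fin_cases i <;> fin_cases j <;> simp [hM]
        rw [hsub] at hle
        have hdetval : (!![c₆, 0, 0; c₇, c₆, 0; c₄, c₃, c₆]).det = c₆ ^ 3 := by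
          simp [Matrix.det_fin_three]; ring
        have hdet : IsUnit (!![c₆, 0, 0; c₇, c₆, 0; c₄, c₃, c₆]).det := by
          rw [hdetval]; exact isUnit_iff_ne_zero.2 (pow_ne_zero 3 h)
        have hr := Matrix.rank_of_isUnit _ ((Matrix.isUnit_iff_isUnit_det _).2 hdet)
        rw [hr] at hle
        simpa using hle
    omega
  refine ⟨⟨fun hr => ?_, h3⟩, hle1, ?_⟩
  · by_contra hc
    push_neg at hc
    have := hle1 ⟨hc.1, hc.2⟩
    omega
  · by_cases hc : c₃ = 0 ∧ c₆ = 0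
    · have := hle1 hc
      omega
    · have : M.rank = 3 := h3 (by tauto)
      omega
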